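/- Let V₁, V₂ be primitive isometries with output states ρ₁^out(n), ρ₂^out(n) in the stationary regime, and suppose T₁₂^n → 0 as n → ∞, where T₁₂(X) = V₁*(X ⊗ id_K)V₂. Then the outputs become asymptotically orthogonal: lim_{n→∞} tr[ρ₁^out(n)ρ₂^out(n)] = 0. -/

import Mathlib

open Matrix Filter
open scoped Kronecker ComplexOrder

noncomputable section

/-- The action of `Φ ⊗ id_n` on block matrices, used to define complete positivity. -/
def tensorId {a b : Type*} (Φ : Matrix a a ℂ → Matrix b b ℂ) (n : ℕ)
    (X : Matrix (a × Fin n) (a × Fin n) ℂ) : Matrix (b × Fin n) (b × Fin n) ℂ :=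
  fun p q => Φ (fun i j => X (i, p.2) (j, q.2)) p.1 q.1

/-- A map between matrix algebras is completely positive if `Φ ⊗ id_n` preserves
positive semidefiniteness for every `n`. -/
def IsCompletelyPositive {a b : Type*} [Fintype a] [Fintype b]
    (Φ : Matrix a a ℂ → Matrix b b ℂ) : Prop :=
  ∀ (n : ℕ) (X : Matrix (a × Fin n) (a × Fin n) ℂ), X.PosSemidef → (tensorId Φ n X).PosSemidef

/-- The map `X ↦ V₁* (X ⊗ 1_K) V₂` on `B(H₂, H₁)`, as a linear endomorphism.
For `V₁ = V₂ = V` this is the Heisenberg channel associated with the isometry `V`. -/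
def sandwich {α β : Type*} [Fintype α] [Fintype β] {k : ℕ}
    (V₁ : Matrix (α × Fin k) α ℂ) (V₂ : Matrix (β × Fin k) β ℂ) :
    Module.End ℂ (Matrix α β ℂ) where
  toFun X := V₁ᴴ * (X ⊗ₖ (1 : Matrix (Fin k) (Fin k) ℂ)) * V₂
  map_add' X Y := by simp [Matrix.add_kronecker, Matrix.add_mul, Matrix.mul_add]
  map_smul' c X := by simp [Matrix.smul_kronecker, Matrix.smul_mul, Matrix.mul_smul]

/-- The Kraus operators `K_i` of an isometry `V : H → H ⊗ K`,
defined by `K_i φ = (id ⊗ ⟨i|) V φ`. -/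
def kraus {D k : ℕ} (V : Matrix (Fin D × Fin k) (Fin D) ℂ) (i : Fin k) :
    Matrix (Fin D) (Fin D) ℂ :=
  fun a b => V (a, i) b

/-- The `n`-step Kraus operator `K_{ι(n-1)} ⋯ K_{ι(0)}` associated with a word `ι`. -/
def krausString {D k : ℕ} (V : Matrix (Fin D × Fin k) (Fin D) ℂ) :
    (n : ℕ) → (Fin n → Fin k) → Matrix (Fin D) (Fin D) ℂ
  | 0, _ => 1
  | n + 1, ι => kraus V (ι (Fin.last n)) * krausString V n (fun m => ι m.castSucc)

/-- The output state `tr_H [V(n) ρ V(n)*]` after `n` steps, a density matrix on `K^⊗n`. -/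
def outputState {D k : ℕ} (V : Matrix (Fin D × Fin k) (Fin D) ℂ)
    (ρ : Matrix (Fin D) (Fin D) ℂ) (n : ℕ) :
    Matrix (Fin n → Fin k) (Fin n → Fin k) ℂ :=
  fun ι ι' => Matrix.trace (krausString V n ι * ρ * (krausString V n ι')ᴴ)

/-- The Schrödinger (predual) transition map `ρ ↦ Σ_i K_i ρ K_i*`. -/
def schrodinger {D k : ℕ} (V : Matrix (Fin D × Fin k) (Fin D) ℂ)
    (ρ : Matrix (Fin D) (Fin D) ℂ) : Matrix (Fin D) (Fin D) ℂ :=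
  ∑ i, kraus V i * ρ * (kraus V i)ᴴ

/-- A linear endomorphism of a matrix algebra is primitive if some power of it maps every
nonzero positive semidefinite matrix to a positive definite one. -/
def PrimitiveMap {α : Type*} [Fintype α] [DecidableEq α]
    (T : Module.End ℂ (Matrix α α ℂ)) : Prop :=
  ∃ n : ℕ, ∀ X : Matrix α α ℂ, X.PosSemidef → X ≠ 0 → ((T ^ n) X).PosDef

/-- An isometry `V : H → H ⊗ K` is primitive if its channel `X ↦ V*(X ⊗ 1)V` is primitive. -/
def PrimitiveIso {D k : ℕ} (V : Matrix (Fin D × Fin k) (Fin D) ℂ) : Prop :=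
  PrimitiveMap (sandwich V V)

/-- The pure state `|x⟩⟨x|` associated with a vector `x`. -/
def outer {α : Type*} (x : α → ℂ) : Matrix α α ℂ := Matrix.vecMulVec x (star x)

/-- The trace norm of a matrix: the trace of `√(A* A)`. -/
def traceNorm {α : Type*} [Fintype α] [DecidableEq α] (A : Matrix α α ℂ) : ℝ :=
  (((Matrix.posSemidef_conjTranspose_mul_self A).1.eigenvectorUnitary : Matrix α α ℂ) *
    Matrix.diagonal ((fun x : ℝ => (x : ℂ)) ∘ (Real.sqrt ·) ∘ (Matrix.posSemidef_conjTranspose_mul_self A).1.eigenvalues) *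
    (star (Matrix.posSemidef_conjTranspose_mul_self A).1.eigenvectorUnitary : Matrix α α ℂ)).trace.re

/-- A quantum channel: a completely positive trace preserving linear map. -/
def IsCPTP {α β : Type*} [Fintype α] [Fintype β]
    (Φ : Matrix α α ℂ →ₗ[ℂ] Matrix β β ℂ) : Prop :=
  IsCompletelyPositive (Φ : Matrix α α ℂ → Matrix β β ℂ) ∧
    ∀ X : Matrix α α ℂ, (Φ X).trace = X.trace

/-! Since `T₁₂ⁿ(X) = Σ_ι K¹_ι* X K²_ι` over the words `ι` of length `n`, and
`tr M · tr N = Σ_{a,d} tr[E_ad M E_da N]` for the matrix units `E_ad`, the overlap of the outputs is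
`tr[ρ₁^out(n) ρ₂^out(n)] = Σ_{a,d} tr[ρ₁ T₁₂ⁿ(E_ad) ρ₂ T₁₂ⁿ(E_ad)*]`, and each summand is a
continuous function of `T₁₂ⁿ(E_ad) → 0` vanishing at `0`. -/

lemma sandwich_apply_eq_sum_kraus {D₁ D₂ k : ℕ} (V₁ : Matrix (Fin D₁ × Fin k) (Fin D₁) ℂ)
    (V₂ : Matrix (Fin D₂ × Fin k) (Fin D₂) ℂ) (X : Matrix (Fin D₁) (Fin D₂) ℂ) :
    sandwich V₁ V₂ X = ∑ i, (kraus V₁ i)ᴴ * X * kraus V₂ i := by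
  ext p q
  simp only [sandwich, LinearMap.coe_mk, AddHom.coe_mk, Matrix.sum_apply, mul_apply,
    conjTranspose_apply, kroneckerMap_apply, Fintype.sum_prod_type, one_apply, kraus,
    Finset.sum_mul, mul_ite, mul_one, mul_zero, Finset.sum_ite_eq', Finset.mem_univ, if_true]
  exact Finset.sum_comm

lemma krausString_snoc {D k : ℕ} (V : Matrix (Fin D × Fin k) (Fin D) ℂ) (n : ℕ)
    (ι : Fin n → Fin k) (i : Fin k) :
    krausString V (n + 1) (Fin.snoc ι i) = kraus V i * krausString V n ι := by
  simp only [krausString, Fin.snoc_last, Fin.snoc_castSucc]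

lemma sandwich_pow_apply_eq_sum_krausString {D₁ D₂ k : ℕ}
    (V₁ : Matrix (Fin D₁ × Fin k) (Fin D₁) ℂ) (V₂ : Matrix (Fin D₂ × Fin k) (Fin D₂) ℂ)
    (n : ℕ) (X : Matrix (Fin D₁) (Fin D₂) ℂ) :
    (sandwich V₁ V₂ ^ n) X = ∑ ι, (krausString V₁ n ι)ᴴ * X * krausString V₂ n ι := by
  induction n generalizing X with
  | zero => simp [krausString]
  | succ n ih =>
    rw [pow_succ, Module.End.mul_apply, ih, sandwich_apply_eq_sum_kraus,
      ← (Fin.snocEquiv fun _ => Fin k).sum_comp, Fintype.sum_prod_type, Finset.sum_comm]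
    refine Finset.sum_congr rfl fun ι _ => ?_
    have snoc_eq (i : Fin k) : (Fin.snocEquiv fun _ => Fin k) (i, ι) = Fin.snoc ι i := rfl
    simp only [snoc_eq, krausString_snoc, conjTranspose_mul, Matrix.mul_sum,
      Matrix.sum_mul, Matrix.mul_assoc]

lemma sum_trace_single_mul_mul_single_mul {R α β : Type*} [CommSemiring R]
    [Fintype α] [DecidableEq α] [Fintype β] [DecidableEq β]
    (M : Matrix β β R) (N : Matrix α α R) :
    ∑ a : α, ∑ d : β, (single a d (1 : R) * M * single d a (1 : R) * N).trace
      = M.trace * N.trace := by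
  simp [trace, mul_apply, single, Finset.sum_mul, Finset.mul_sum, ite_and]

lemma sum_trace_mul_sum_single_eq_sum_trace_mul_trace {R ι α β : Type*} [CommSemiring R]
    [StarRing R] [Fintype ι] [Fintype α] [DecidableEq α] [Fintype β] [DecidableEq β]
    (A : ι → Matrix α α R) (B : ι → Matrix β β R) (ρ₁ : Matrix α α R) (ρ₂ : Matrix β β R) :
    ∑ a : α, ∑ d : β, (ρ₁ * (∑ w, (A w)ᴴ * single a d (1 : R) * B w) * ρ₂ *
        (∑ w, (A w)ᴴ * single a d (1 : R) * B w)ᴴ).trace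
      = ∑ w, ∑ w', (A w * ρ₁ * (A w')ᴴ).trace * (B w' * ρ₂ * (B w)ᴴ).trace := by
  have cyclic (a : α) (d : β) (w w' : ι) :
      (ρ₁ * ((A w')ᴴ * single a d (1 : R) * B w') * ρ₂ *
          ((A w)ᴴ * single a d (1 : R) * B w)ᴴ).trace
        = (single a d (1 : R) * (B w' * ρ₂ * (B w)ᴴ) * single d a (1 : R) *
          (A w * ρ₁ * (A w')ᴴ)).trace := by
    simp only [conjTranspose_mul, conjTranspose_conjTranspose, conjTranspose_single, star_one,
      Matrix.mul_assoc]
    rw [trace_mul_comm, Matrix.mul_assoc, trace_mul_comm]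
    simp only [Matrix.mul_assoc]
  simp only [conjTranspose_sum, Matrix.mul_sum, Matrix.sum_mul, trace_sum, cyclic]
  rw [← Fintype.sum_prod_type', Finset.sum_comm]
  refine Finset.sum_congr rfl fun w _ => ?_
  rw [Finset.sum_comm]
  refine Finset.sum_congr rfl fun w' _ => ?_
  simp only [Fintype.sum_prod_type]
  rw [sum_trace_single_mul_mul_single_mul, mul_comm]

lemma trace_outputState_mul_outputState {D₁ D₂ k : ℕ}
    (V₁ : Matrix (Fin D₁ × Fin k) (Fin D₁) ℂ) (V₂ : Matrix (Fin D₂ × Fin k) (Fin D₂) ℂ)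
    (ρ₁ : Matrix (Fin D₁) (Fin D₁) ℂ) (ρ₂ : Matrix (Fin D₂) (Fin D₂) ℂ) (n : ℕ) :
    (outputState V₁ ρ₁ n * outputState V₂ ρ₂ n).trace
      = ∑ a, ∑ d, (ρ₁ * (sandwich V₁ V₂ ^ n) (single a d 1) * ρ₂ *
          ((sandwich V₁ V₂ ^ n) (single a d 1))ᴴ).trace := by
  simp only [sandwich_pow_apply_eq_sum_krausString,
    sum_trace_mul_sum_single_eq_sum_trace_mul_trace]
  rfl

theorem outputs_asymptotically_orthogonal_general (D₁ D₂ k : ℕ)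
    (V₁ : Matrix (Fin D₁ × Fin k) (Fin D₁) ℂ)
    (V₂ : Matrix (Fin D₂ × Fin k) (Fin D₂) ℂ)
    (ρ₁ : Matrix (Fin D₁) (Fin D₁) ℂ)
    (ρ₂ : Matrix (Fin D₂) (Fin D₂) ℂ)
    (hT12 : ∀ X : Matrix (Fin D₁) (Fin D₂) ℂ,
      Filter.Tendsto (fun n => ((sandwich V₁ V₂) ^ n) X) Filter.atTop (nhds 0)) :
    Filter.Tendsto
      (fun n => Matrix.trace (outputState V₁ ρ₁ n * outputState V₂ ρ₂ n))
      Filter.atTop (nhds 0) := by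
  have hcont : Continuous fun X : Matrix (Fin D₁) (Fin D₂) ℂ => (ρ₁ * X * ρ₂ * Xᴴ).trace := by
    fun_prop
  have hsum := tendsto_finsetSum Finset.univ fun a _ => tendsto_finsetSum Finset.univ fun d _ =>
    (hcont.tendsto 0).comp (hT12 (single a d 1))
  simpa [Function.comp_def, trace_outputState_mul_outputState] using hsum

/-- If `T₁₂^n → 0`, the stationary outputs of two primitive isometries become asymptotically
orthogonal: `tr[ρ₁^out(n) ρ₂^out(n)] → 0`. -/
theorem outputs_asymptotically_orthogonal (D₁ D₂ k : ℕ)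
    (V₁ : Matrix (Fin D₁ × Fin k) (Fin D₁) ℂ) (hV₁ : V₁ᴴ * V₁ = 1) (hP₁ : PrimitiveIso V₁)
    (V₂ : Matrix (Fin D₂ × Fin k) (Fin D₂) ℂ) (hV₂ : V₂ᴴ * V₂ = 1) (hP₂ : PrimitiveIso V₂)
    (ρ₁ : Matrix (Fin D₁) (Fin D₁) ℂ) (hρ₁pos : ρ₁.PosDef) (hρ₁tr : ρ₁.trace = 1)
    (hρ₁stat : schrodinger V₁ ρ₁ = ρ₁)
    (ρ₂ : Matrix (Fin D₂) (Fin D₂) ℂ) (hρ₂pos : ρ₂.PosDef) (hρ₂tr : ρ₂.trace = 1)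
    (hρ₂stat : schrodinger V₂ ρ₂ = ρ₂)
    (hT12 : ∀ X : Matrix (Fin D₁) (Fin D₂) ℂ,
      Filter.Tendsto (fun n => ((sandwich V₁ V₂) ^ n) X) Filter.atTop (nhds 0)) :
    Filter.Tendsto
      (fun n => Matrix.trace (outputState V₁ ρ₁ n * outputState V₂ ρ₂ n))
      Filter.atTop (nhds 0) :=
  outputs_asymptotically_orthogonal_general D₁ D₂ k V₁ V₂ ρ₁ ρ₂ hT12
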